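/- In Setup B, let J₁, J₂ ∈ Λ with n+1 ∈ J₁ and n+1 ∈ J₂, let c¹ = (c¹_i)_{i∈J₁} and c² = (c²_i)_{i∈J₂} be families of integers, and fix choices i_{1,0} ∈ I'∖J₁ and i_{2,0} ∈ I'∖J₂ defining F(J₁,c¹) and F(J₂,c²). If C(J₁,c¹) is not contained in C(J₂,c²), then F(J₁,c¹) is not contained in F(J₂,c²), and the set difference F(J₁,c¹) ∖ F(J₂,c²), equipped with the subspace topology from ℝⁿ, is a contractible topological space. -/

import Mathlib

/-!
In the coordinates `z_j = ⟪x, b_j⟫` (`j ≤ n`), choosing the admissible multi-index maximal shows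
that `F(J,c)` is the set where `z_j > c_j` for `j ∈ J ∖ {n+1}` and the stair sum
`σ(z) = ∑_{j ∈ I'} α_j (⌈z_j⌉ - 1)` is at least `c_{n+1}`. Both `F`-sets are upper sets, so their
difference `W` is order-convex and contains the segment between any two comparable points of it.
It therefore suffices to retract `W` onto a star-convex subset by a map `r` with `r z` comparable
to `z`.

If `c¹_{n+1} < c²_{n+1}`, move coordinate `i_{1,0}` until `λ(z) = ∑ α_j z_j = c¹_{n+1} + 1`; as
`λ - 1 ≤ σ < λ`, this hyperplane section of the first orthant is a convex subset of `W`. Otherwise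
`C(J₁,c¹) ⊄ C(J₂,c²)` yields an integral corner `ℓ ∈ W` (pushed up in coordinate `i_{2,0}` to make
`σ` large) such that `z ↦ z ⊔ ℓ` retracts `W` onto `W ∩ [ℓ, ∞)`, which is star-convex about `ℓ`.
-/

open scoped RealInnerProductSpace BigOperators

noncomputable section

/-- Euclidean space `ℝⁿ` with the standard inner product. -/
abbrev E (n : ℕ) : Type := EuclideanSpace ℝ (Fin n)

/-- The index set `I' = {1,…,n'}` inside `Ī = {1,…,n+1}` (index `Fin.last n`
plays the role of `n+1`). -/
def Iprime (n n' : ℕ) : Finset (Fin (n + 1)) := Finset.univ.filter fun i => i.val < n'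

/-- `C(J,c) := {x ∈ ℝⁿ : ⟨x, b_i⟩ > c_i for all i ∈ J}`. -/
def CSet (n : ℕ) (b : Fin (n + 1) → E n) (J : Finset (Fin (n + 1)))
    (c : Fin (n + 1) → ℤ) : Set (E n) :=
  {x | ∀ i ∈ J, (c i : ℝ) < ⟪x, b i⟫}

/-- A multi-index `𝔪 = (m_i)_{i ∈ I'∖{i₀}}` is admissible if `m_i ≥ 0` for every
`i ∈ I' ∩ J` (recall `i₀ ∉ J`). -/
def Admissible (n n' : ℕ) (J : Finset (Fin (n + 1))) (m : Fin (n + 1) → ℤ) : Prop :=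
  ∀ i ∈ Iprime n n' ∩ J, 0 ≤ m i

/-- The ceiling bound
`⌈(c_{n+1} − Σ_{i∈I'∩J} α_i(c_i+m_i) − Σ_{i∈I'∩K₁} α_i m_i)/α_{i₀}⌉`,
where `K₁ = Ī∖(J∪{i₀})`, so `I'∩K₁ = (I'∖J)∖{i₀}`. -/
def ceilB (n n' : ℕ) (α : Fin (n + 1) → ℚ) (J : Finset (Fin (n + 1)))
    (i₀ : Fin (n + 1)) (c m : Fin (n + 1) → ℤ) : ℤ :=
  ⌈((c (Fin.last n) : ℚ) - ∑ i ∈ Iprime n n' ∩ J, α i * ((c i : ℚ) + (m i : ℚ))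
      - ∑ i ∈ (Iprime n n' \ J).erase i₀, α i * (m i : ℚ)) / α i₀⌉

/-- `V(J,c,𝔪)` as in Setup B. -/
def VSet (n n' : ℕ) (b : Fin (n + 1) → E n) (α : Fin (n + 1) → ℚ)
    (J : Finset (Fin (n + 1))) (i₀ : Fin (n + 1)) (c m : Fin (n + 1) → ℤ) :
    Set (E n) :=
  {x | (∀ i ∈ Iprime n n' ∩ J, ((c i : ℝ) + (m i : ℝ)) < ⟪x, b i⟫)
    ∧ (∀ i ∈ (Iprime n n' \ J).erase i₀, (m i : ℝ) < ⟪x, b i⟫)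
    ∧ (∀ i ∈ (J \ Iprime n n').erase (Fin.last n), (c i : ℝ) < ⟪x, b i⟫)
    ∧ ((ceilB n n' α J i₀ c m : ℝ) < ⟪x, b i₀⟫)}

/-- `F(J,c) := ⋃_{𝔪 admissible} V(J,c,𝔪)` (for `n+1 ∈ J`, with the choice `i₀`). -/
def FSetB (n n' : ℕ) (b : Fin (n + 1) → E n) (α : Fin (n + 1) → ℚ)
    (J : Finset (Fin (n + 1))) (i₀ : Fin (n + 1)) (c : Fin (n + 1) → ℤ) : Set (E n) :=
  {x | ∃ m : Fin (n + 1) → ℤ, Admissible n n' J m ∧ x ∈ VSet n n' b α J i₀ c m}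

/-- `F(J,c)` in general: the union above when `n+1 ∈ J`, and `C(J,c)` otherwise. -/
def FSetB' (n n' : ℕ) (b : Fin (n + 1) → E n) (α : Fin (n + 1) → ℚ)
    (J : Finset (Fin (n + 1))) (i₀ : Fin (n + 1)) (c : Fin (n + 1) → ℤ) : Set (E n) :=
  if Fin.last n ∈ J then FSetB n n' b α J i₀ c else CSet n b J c

open Set

theorem ContractibleSpace.of_homotopic_id_comp {X Y : Type*} [TopologicalSpace X]
    [TopologicalSpace Y] [ContractibleSpace Y] (f : C(X, Y)) (g : C(Y, X))
    (h : (ContinuousMap.id X).Homotopic (g.comp f)) : ContractibleSpace X := by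
  obtain ⟨x, hx⟩ := ((id_nullhomotopic Y).comp_left f).comp_right g
  exact (contractible_iff_id_nullhomotopic X).2 ⟨x, h.trans hx⟩

theorem ContractibleSpace.of_segment_retraction {V : Type*} [AddCommGroup V] [Module ℝ V]
    [TopologicalSpace V] [ContinuousAdd V] [ContinuousSMul ℝ V] {W K : Set V}
    [ContractibleSpace K] (hKW : K ⊆ W) {r : V → V} (hr : ContinuousOn r W) (hrK : MapsTo r W K)
    (hseg : ∀ z ∈ W, segment ℝ z (r z) ⊆ W) : ContractibleSpace W := by
  have hr' : Continuous fun p : unitInterval × W ↦ r p.2 := hr.domRestrict.comp continuous_snd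
  have ht : Continuous fun p : unitInterval × W ↦ (p.1 : ℝ) :=
    continuous_subtype_val.comp continuous_fst
  refine .of_homotopic_id_comp ⟨_, hr.mapsToRestrict hrK⟩ ⟨_, continuous_inclusion hKW⟩
    ⟨⟨⟨fun p ↦ ⟨(1 - (p.1 : ℝ)) • (p.2 : V) + (p.1 : ℝ) • r p.2, ?_⟩, ?_⟩, ?_, ?_⟩⟩
  · exact hseg _ p.2.2 ⟨_, _, sub_nonneg.2 p.1.2.2, p.1.2.1, sub_add_cancel _ _, rfl⟩
  · exact Continuous.subtype_mk (((continuous_const.sub ht).smul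
      (continuous_subtype_val.comp continuous_snd)).add (ht.smul hr')) _
  · intro z; simp
  · intro z; simp

theorem Homeomorph.contractibleSpace_preimage {X Y : Type*} [TopologicalSpace X]
    [TopologicalSpace Y] (Φ : X ≃ₜ Y) {s : Set Y} (hs : ContractibleSpace s) :
    ContractibleSpace (Φ ⁻¹' s) :=
  (Φ.subtype (q := (· ∈ s)) fun _ ↦ Iff.rfl).contractibleSpace

theorem Set.OrdConnected.segment_subset {𝕜 V : Type*} [Semiring 𝕜] [PartialOrder 𝕜]
    [AddCommMonoid V] [PartialOrder V] [IsOrderedAddMonoid V] [Module 𝕜 V] [PosSMulMono 𝕜 V]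
    {s : Set V} (hs : s.OrdConnected) {x y : V} (hx : x ∈ s) (hy : y ∈ s)
    (hxy : x ≤ y ∨ y ≤ x) : segment 𝕜 x y ⊆ s := by
  rcases hxy with hxy | hyx
  · exact (segment_subset_Icc hxy).trans (hs.out hx hy)
  · rw [segment_symm]
    exact (segment_subset_Icc hyx).trans (hs.out hy hx)

theorem ContractibleSpace.of_ordConnected_retraction {V : Type*} [AddCommGroup V]
    [PartialOrder V] [IsOrderedAddMonoid V] [Module ℝ V] [PosSMulMono ℝ V] [TopologicalSpace V]
    [ContinuousAdd V] [ContinuousSMul ℝ V] {W K : Set V} [ContractibleSpace K]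
    (hW : W.OrdConnected) (hKW : K ⊆ W) {r : V → V} (hr : ContinuousOn r W)
    (hrK : MapsTo r W K) (hcomp : ∀ z ∈ W, z ≤ r z ∨ r z ≤ z) : ContractibleSpace W :=
  .of_segment_retraction hKW hr hrK fun z hz ↦ hW.segment_subset hz (hKW (hrK hz)) (hcomp z hz)

theorem exists_homeomorph_apply_eq_inner {V ι : Type*} [NormedAddCommGroup V]
    [InnerProductSpace ℝ V] [FiniteDimensional ℝ V] [Fintype ι] (v : ι → V)
    (hspan : Submodule.span ℝ (range v) = ⊤) (hdim : Module.finrank ℝ V = Fintype.card ι) :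
    ∃ Φ : V ≃ₜ (ι → ℝ), ∀ x j, Φ x j = ⟪x, v j⟫ := by
  let f : V →ₗ[ℝ] ι → ℝ := LinearMap.pi fun j ↦ (innerₗ V).flip (v j)
  have hf : Function.Injective f := by
    refine (injective_iff_map_eq_zero f).2 fun x hx ↦ ?_
    have : innerₗ V x = 0 := LinearMap.ext_on_range hspan fun j ↦ congrFun hx j
    exact inner_self_eq_zero.1 (LinearMap.congr_fun this x)
  exact ⟨(f.linearEquivOfInjective hf (by simp [hdim])).toContinuousLinearEquiv.toHomeomorph,
    fun _ _ ↦ rfl⟩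

theorem Int.le_ceil_sub_one_of_lt {R : Type*} [Ring R] [LinearOrder R] [FloorRing R]
    [IsOrderedRing R] {k : ℤ} {y : R} (h : (k : R) < y) : (k : R) ≤ ⌈y⌉ - 1 := by
  exact_mod_cast Int.le_sub_one_iff.2 (Int.lt_ceil.2 h)

theorem Int.ceil_sub_one_lt {R : Type*} [Ring R] [LinearOrder R] [FloorRing R]
    [IsOrderedRing R] (y : R) : (⌈y⌉ : R) - 1 < y :=
  sub_lt_iff_lt_add.2 (Int.ceil_lt_add_one y)

section Staircase

variable {ι : Type*}

def stairSum (P : Finset ι) (a z : ι → ℝ) : ℝ := ∑ j ∈ P, a j * (⌈z j⌉ - 1)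

def upperOrthant (S : Finset ι) (d : ι → ℤ) : Set (ι → ℝ) := {z | ∀ j ∈ S, (d j : ℝ) < z j}

def staircase (P S : Finset ι) (a : ι → ℝ) (d : ι → ℤ) (e : ℤ) : Set (ι → ℝ) :=
  upperOrthant S d ∩ {z | (e : ℝ) ≤ stairSum P a z}

variable {P S S₁ S₂ : Finset ι} {a : ι → ℝ} {d d₁ d₂ : ι → ℤ} {e e₁ e₂ : ℤ} {u u₁ u₂ : ι}

theorem mem_staircase {z : ι → ℝ} :
    z ∈ staircase P S a d e ↔ z ∈ upperOrthant S d ∧ (e : ℝ) ≤ stairSum P a z :=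
  Iff.rfl

theorem isUpperSet_upperOrthant : IsUpperSet (upperOrthant S d) :=
  fun _ _ hzw hz j hj ↦ (hz j hj).trans_le (hzw j)

theorem convex_upperOrthant : Convex ℝ (upperOrthant S d) := by
  simp only [upperOrthant, ofPred_forall]
  exact convex_iInter₂ fun j _ ↦ convex_halfSpace_gt (LinearMap.proj j).isLinear _

theorem monotone_stairSum (ha : ∀ j ∈ P, 0 ≤ a j) : Monotone (stairSum P a) := fun _ _ hzw ↦
  Finset.sum_le_sum fun j hj ↦ mul_le_mul_of_nonneg_left
    (by gcongr; exact hzw j) (ha j hj)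

theorem isUpperSet_staircase (ha : ∀ j ∈ P, 0 ≤ a j) : IsUpperSet (staircase P S a d e) :=
  isUpperSet_upperOrthant.inter fun _ _ hzw hz ↦ hz.trans (monotone_stairSum ha hzw)

theorem ordConnected_staircase_diff (ha : ∀ j ∈ P, 0 ≤ a j) :
    (staircase P S₁ a d₁ e₁ \ staircase P S₂ a d₂ e₂).OrdConnected :=
  (isUpperSet_staircase ha).ordConnected.inter (isUpperSet_staircase ha).compl.ordConnected

theorem sum_mul_sub_le_stairSum (ha : ∀ j ∈ P, 0 ≤ a j) (z : ι → ℝ) :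
    ∑ j ∈ P, a j * z j - ∑ j ∈ P, a j ≤ stairSum P a z := by
  rw [← Finset.sum_sub_distrib]
  refine Finset.sum_le_sum fun j hj ↦ ?_
  rw [← mul_sub_one]
  exact mul_le_mul_of_nonneg_left (by linarith [Int.le_ceil (z j)]) (ha j hj)

theorem stairSum_lt_sum_mul (ha : ∀ j ∈ P, 0 ≤ a j) (hu : u ∈ P) (hau : 0 < a u)
    (z : ι → ℝ) : stairSum P a z < ∑ j ∈ P, a j * z j :=
  Finset.sum_lt_sum
    (fun j hj ↦ mul_le_mul_of_nonneg_left (Int.ceil_sub_one_lt (z j)).le (ha j hj))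
    ⟨u, hu, mul_lt_mul_of_pos_left (Int.ceil_sub_one_lt (z u)) hau⟩

theorem sum_mul_add_single [DecidableEq ι] (hu : u ∈ P) (z : ι → ℝ) (t : ℝ) :
    ∑ j ∈ P, a j * (z + Pi.single u t : ι → ℝ) j = ∑ j ∈ P, a j * z j + a u * t := by
  simp [mul_add, Finset.sum_add_distrib, Pi.single_apply, hu]

theorem contractibleSpace_staircase_diff_of_lt [DecidableEq ι] (ha : ∀ j ∈ P, 0 ≤ a j)
    (hsum : ∑ j ∈ P, a j ≤ 1) (hu : u ∈ P) (hau : 0 < a u) (huS : u ∉ S₁) (he : e₁ < e₂) :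
    ContractibleSpace ↥(staircase P S₁ a d₁ e₁ \ staircase P S₂ a d₂ e₂) := by
  set lam : (ι → ℝ) → ℝ := fun z ↦ ∑ j ∈ P, a j * z j
  have hlam : IsLinearMap ℝ lam :=
    ⟨fun z w ↦ by simp [lam, mul_add, Finset.sum_add_distrib],
      fun c z ↦ by
        simp only [lam, Pi.smul_apply, smul_eq_mul, Finset.mul_sum]
        exact Finset.sum_congr rfl fun _ _ ↦ by ring⟩
  -- On the hyperplane `lam = e₁ + 1` the stair sum lies in `[e₁, e₁ + 1)`.
  set K := upperOrthant S₁ d₁ ∩ {z | lam z = e₁ + 1}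
  have hKW : K ⊆ staircase P S₁ a d₁ e₁ \ staircase P S₂ a d₂ e₂ := by
    rintro z ⟨hz, hzL : ∑ j ∈ P, a j * z j = e₁ + 1⟩
    have hlow := sum_mul_sub_le_stairSum ha z
    have hup := stairSum_lt_sum_mul ha hu hau z
    have he' : (e₁ : ℝ) + 1 ≤ e₂ := by exact_mod_cast he
    exact ⟨mem_staircase.2 ⟨hz, by linarith⟩, fun h ↦ by linarith [(mem_staircase.1 h).2]⟩
  have hlamc : Continuous lam :=
    continuous_finsetSum _ fun j _ ↦ continuous_const.mul (continuous_apply j)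
  set r : (ι → ℝ) → (ι → ℝ) := fun z ↦ z + Pi.single u ((e₁ + 1 - lam z) / a u)
  have hrK : MapsTo r (upperOrthant S₁ d₁) K := by
    intro z hz
    refine ⟨fun j hj ↦ ?_, ?_⟩
    · simpa [r, ne_of_mem_of_not_mem hj huS] using hz j hj
    · simp only [mem_ofPred_eq, r, lam, sum_mul_add_single hu]
      field_simp
      ring
  have := (convex_upperOrthant.inter (convex_hyperplane hlam _)).contractibleSpace
    ⟨_, hrK (fun j _ ↦ lt_add_one (d₁ j : ℝ))⟩
  have hr : Continuous r :=
    continuous_id.add ((continuous_single u).comp ((continuous_const.sub hlamc).div_const _))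
  refine .of_ordConnected_retraction (ordConnected_staircase_diff ha) hKW hr.continuousOn
    (hrK.mono_left fun z hz ↦ hz.1.1) fun z _ ↦ ?_
  rcases le_total 0 ((e₁ + 1 - lam z) / a u) with h | h
  · exact .inl (le_add_of_nonneg_right (Pi.single_nonneg.2 h))
  · exact .inr (add_le_of_nonpos_right (Pi.single_nonpos.2 h))

theorem contractibleSpace_staircase_diff_of_le [DecidableEq ι] (ha : ∀ j ∈ P, 0 ≤ a j)
    (hu : u ∈ P) (hau : 0 < a u) (huS : u ∉ S₂)
    (hS : ¬ upperOrthant S₁ d₁ ⊆ upperOrthant S₂ d₂) (he : e₂ ≤ e₁) :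
    ContractibleSpace ↥(staircase P S₁ a d₁ e₁ \ staircase P S₂ a d₂ e₂) := by
  set W := staircase P S₁ a d₁ e₁ \ staircase P S₂ a d₂ e₂
  set ℓ₀ : ι → ℝ := fun j ↦ if j ∈ S₁ then d₁ j + 1 else d₂ j
  have hℓ₀ : ℓ₀ ∈ upperOrthant S₁ d₁ := fun j hj ↦ by simp [ℓ₀, hj]
  set t := max 0 ((e₁ + ∑ j ∈ P, a j - ∑ j ∈ P, a j * ℓ₀ j) / a u)
  set ℓ := ℓ₀ + Pi.single u t
  have hℓ₀ℓ : ℓ₀ ≤ ℓ := le_add_of_nonneg_right (Pi.single_nonneg.2 (le_max_left _ _))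
  have hℓ : ℓ ∈ staircase P S₁ a d₁ e₁ := by
    refine mem_staircase.2 ⟨isUpperSet_upperOrthant hℓ₀ℓ hℓ₀, ?_⟩
    have hlow := sum_mul_sub_le_stairSum ha ℓ
    have ht : e₁ + ∑ j ∈ P, a j - ∑ j ∈ P, a j * ℓ₀ j ≤ a u * t := by
      rw [← mul_div_cancel₀ (e₁ + ∑ j ∈ P, a j - ∑ j ∈ P, a j * ℓ₀ j) hau.ne']
      exact mul_le_mul_of_nonneg_left (le_max_right _ _) hau.le
    rw [sum_mul_add_single hu] at hlow
    linarith
  -- `ℓ` fails every coordinate of `S₂` that a point of the first orthant fails, by integrality.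
  have hsup : ∀ z ∈ upperOrthant S₁ d₁, z ∉ upperOrthant S₂ d₂ →
      z ⊔ ℓ ∉ upperOrthant S₂ d₂ := by
    intro z hz₁ hz₂ h
    simp only [upperOrthant, mem_ofPred_eq, not_forall, not_lt] at hz₂
    obtain ⟨j, hj, hzj⟩ := hz₂
    have hℓj : ℓ j ≤ d₂ j := by
      simp only [ℓ, Pi.add_apply, Pi.single_eq_of_ne (ne_of_mem_of_not_mem hj huS), add_zero, ℓ₀]
      split_ifs with hj₁
      · have : d₁ j < d₂ j := by exact_mod_cast (hz₁ j hj₁).trans_le hzj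
        exact_mod_cast Int.add_one_le_iff.2 this
      · rfl
    exact (h j hj).not_ge (sup_le hzj hℓj)
  obtain ⟨y, hy₁, hy₂⟩ := not_subset.1 hS
  have hℓW : ℓ ∈ W := ⟨hℓ, fun h ↦ hsup y hy₁ hy₂ (isUpperSet_upperOrthant le_sup_right h.1)⟩
  have hW₁ : (W ∩ Ici ℓ).OrdConnected := (ordConnected_staircase_diff ha).inter ordConnected_Ici
  have := (hW₁.starConvex (𝕜 := ℝ) ⟨hℓW, self_mem_Ici⟩ fun z hz ↦ .inl hz.2).contractibleSpace
    ⟨ℓ, hℓW, self_mem_Ici⟩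
  have hr : Continuous (· ⊔ ℓ) := continuous_pi fun j ↦ (continuous_apply j).max continuous_const
  refine .of_ordConnected_retraction (ordConnected_staircase_diff ha) (K := W ∩ Ici ℓ)
    inter_subset_left hr.continuousOn ?_ fun z _ ↦ .inl le_sup_left
  rintro z ⟨hz₁, hz₂⟩
  refine ⟨⟨isUpperSet_staircase ha le_sup_left hz₁, fun h ↦ hsup z hz₁.1 ?_ h.1⟩,
    mem_Ici.2 le_sup_right⟩
  exact fun h ↦ hz₂ (mem_staircase.2 ⟨h, (Int.cast_le.2 he).trans (mem_staircase.1 hz₁).2⟩)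

theorem contractibleSpace_staircase_diff [DecidableEq ι] (ha : ∀ j ∈ P, 0 ≤ a j)
    (hsum : ∑ j ∈ P, a j ≤ 1) (hu₁ : u₁ ∈ P) (hau₁ : 0 < a u₁) (hu₁S : u₁ ∉ S₁) (hu₂ : u₂ ∈ P)
    (hau₂ : 0 < a u₂) (hu₂S : u₂ ∉ S₂)
    (h : ¬ (upperOrthant S₁ d₁ ⊆ upperOrthant S₂ d₂ ∧ e₂ ≤ e₁)) :
    ContractibleSpace ↥(staircase P S₁ a d₁ e₁ \ staircase P S₂ a d₂ e₂) := by
  rcases lt_or_ge e₁ e₂ with he | he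
  · exact contractibleSpace_staircase_diff_of_lt ha hsum hu₁ hau₁ hu₁S he
  · exact contractibleSpace_staircase_diff_of_le ha hu₂ hau₂ hu₂S (fun hS ↦ h ⟨hS, he⟩) he

end Staircase

section SetupB

variable {n n' : ℕ}

theorem Iprime_ne_last (hn'n : n' ≤ n) {i : Fin (n + 1)} (hi : i ∈ Iprime n n') :
    i ≠ Fin.last n := by
  rintro rfl
  simp [Iprime] at hi
  omega

theorem sum_Iprime_split {J : Finset (Fin (n + 1))} {i₀ : Fin (n + 1)}
    (hi₀ : i₀ ∈ Iprime n n' \ J) (f : Fin (n + 1) → ℝ) :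
    ∑ i ∈ Iprime n n', f i =
      ∑ i ∈ Iprime n n' ∩ J, f i + ∑ i ∈ (Iprime n n' \ J).erase i₀, f i + f i₀ := by
  rw [add_assoc, Finset.sum_erase_add _ _ hi₀, Finset.sum_inter_add_sum_sdiff]

theorem ceilB_lt_iff {α : Fin (n + 1) → ℚ} {J : Finset (Fin (n + 1))} {i₀ : Fin (n + 1)}
    {c m : Fin (n + 1) → ℤ} (hα : 0 < α i₀) {y : ℝ} :
    (ceilB n n' α J i₀ c m : ℝ) < y ↔
      (c (Fin.last n) : ℝ) ≤ ∑ i ∈ Iprime n n' ∩ J, (α i : ℝ) * (c i + m i)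
        + ∑ i ∈ (Iprime n n' \ J).erase i₀, (α i : ℝ) * m i + α i₀ * (⌈y⌉ - 1) := by
  rw [← Int.lt_ceil, ← Int.le_sub_one_iff, ceilB, Int.ceil_le, div_le_iff₀ hα,
    ← Rat.cast_le (K := ℝ)]
  push_cast
  constructor <;> intro h <;> linarith

theorem mem_FSetB_of_le_sum {b : Fin (n + 1) → E n} {α : Fin (n + 1) → ℚ}
    {J : Finset (Fin (n + 1))} {i₀ : Fin (n + 1)} {c : Fin (n + 1) → ℤ} (hn'n : n' ≤ n)
    (hα : 0 < α i₀) (hi₀ : i₀ ∈ Iprime n n' \ J) {x : E n}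
    (hcoord : ∀ i ∈ J, i ≠ Fin.last n → (c i : ℝ) < ⟪x, b i⟫)
    (hsum : (c (Fin.last n) : ℝ) ≤ ∑ i ∈ Iprime n n', (α i : ℝ) * (⌈⟪x, b i⟫⌉ - 1)) :
    x ∈ FSetB n n' b α J i₀ c := by
  set Y : Fin (n + 1) → ℤ := fun i ↦ ⌈⟪x, b i⟫⌉ - 1
  refine ⟨fun i ↦ if i ∈ J then Y i - c i else Y i, fun i hi ↦ ?_, fun i hi ↦ ?_,
    fun i hi ↦ ?_, fun i hi ↦ ?_, ?_⟩
  · obtain ⟨hiI, hiJ⟩ := Finset.mem_inter.1 hi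
    have : (c i : ℝ) ≤ Y i := by
      simpa [Y] using Int.le_ceil_sub_one_of_lt (hcoord i hiJ (Iprime_ne_last hn'n hiI))
    simp only [if_pos hiJ, sub_nonneg]
    exact_mod_cast this
  · simpa [if_pos (Finset.mem_inter.1 hi).2, Y] using Int.ceil_sub_one_lt _
  · simpa [if_neg (Finset.mem_sdiff.1 (Finset.mem_of_mem_erase hi)).2, Y] using
      Int.ceil_sub_one_lt _
  · obtain ⟨hne, hi⟩ := Finset.mem_erase.1 hi
    exact hcoord i (Finset.mem_sdiff.1 hi).1 hne
  · rw [ceilB_lt_iff hα]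
    rw [sum_Iprime_split hi₀] at hsum
    convert hsum using 3
    · refine Finset.sum_congr rfl fun i hi ↦ ?_
      simp [if_pos (Finset.mem_inter.1 hi).2, Y]
    · refine Finset.sum_congr rfl fun i hi ↦ ?_
      simp [if_neg (Finset.mem_sdiff.1 (Finset.mem_of_mem_erase hi)).2, Y]

theorem mem_FSetB_iff {b : Fin (n + 1) → E n} {α : Fin (n + 1) → ℚ} {J : Finset (Fin (n + 1))}
    {i₀ : Fin (n + 1)} {c : Fin (n + 1) → ℤ} (hn'n : n' ≤ n) (hα : ∀ i ∈ Iprime n n', 0 < α i)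
    (hi₀ : i₀ ∈ Iprime n n' \ J) {x : E n} :
    x ∈ FSetB n n' b α J i₀ c ↔ (∀ i ∈ J, i ≠ Fin.last n → (c i : ℝ) < ⟪x, b i⟫) ∧
      (c (Fin.last n) : ℝ) ≤ ∑ i ∈ Iprime n n', (α i : ℝ) * (⌈⟪x, b i⟫⌉ - 1) := by
  have hαi₀ := hα i₀ (Finset.mem_sdiff.1 hi₀).1
  refine ⟨?_, fun h ↦ mem_FSetB_of_le_sum hn'n hαi₀ hi₀ h.1 h.2⟩
  rintro ⟨m, hm, h₁, h₂, h₃, h₀⟩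
  refine ⟨fun i hi hne ↦ ?_, ?_⟩
  · by_cases hiI : i ∈ Iprime n n'
    · have hmi : (0 : ℝ) ≤ m i := by exact_mod_cast hm i (Finset.mem_inter.2 ⟨hiI, hi⟩)
      linarith [h₁ i (Finset.mem_inter.2 ⟨hiI, hi⟩)]
    · exact h₃ i (Finset.mem_erase.2 ⟨hne, Finset.mem_sdiff.2 ⟨hi, hiI⟩⟩)
  · rw [sum_Iprime_split hi₀]
    refine ((ceilB_lt_iff hαi₀).1 h₀).trans (add_le_add_left (add_le_add ?_ ?_) _)
    · refine Finset.sum_le_sum fun i hi ↦ mul_le_mul_of_nonneg_left ?_ ?_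
      · have : ((c i + m i : ℤ) : ℝ) < ⟪x, b i⟫ := by exact_mod_cast h₁ i hi
        exact_mod_cast Int.le_ceil_sub_one_of_lt this
      · exact_mod_cast (hα i (Finset.mem_inter.1 hi).1).le
    · refine Finset.sum_le_sum fun i hi ↦
        mul_le_mul_of_nonneg_left (Int.le_ceil_sub_one_of_lt (h₂ i hi)) ?_
      exact_mod_cast (hα i (Finset.mem_sdiff.1 (Finset.mem_of_mem_erase hi)).1).le

def castSuccPreimage (J : Finset (Fin (n + 1))) : Finset (Fin n) :=
  J.preimage Fin.castSucc (Fin.castSucc_injective n).injOn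

@[simp]
theorem mem_castSuccPreimage {J : Finset (Fin (n + 1))} {j : Fin n} :
    j ∈ castSuccPreimage J ↔ j.castSucc ∈ J :=
  Finset.mem_preimage

theorem forall_mem_castSuccPreimage_iff {J : Finset (Fin (n + 1))} {p : Fin (n + 1) → Prop} :
    (∀ j ∈ castSuccPreimage J, p j.castSucc) ↔ ∀ i ∈ J, i ≠ Fin.last n → p i := by
  refine ⟨fun h i hi hne ↦ ?_, fun h j hj ↦ h _ (mem_castSuccPreimage.1 hj) j.castSucc_ne_last⟩
  obtain ⟨j, rfl⟩ := Fin.exists_castSucc_eq.2 hne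
  exact h j (mem_castSuccPreimage.2 hi)

theorem sum_castSuccPreimage {J : Finset (Fin (n + 1))} (hJ : Fin.last n ∉ J)
    (f : Fin (n + 1) → ℝ) : ∑ j ∈ castSuccPreimage J, f j.castSucc = ∑ i ∈ J, f i :=
  Finset.sum_preimage _ _ _ _ fun _ hi hr ↦
    (hr (Fin.exists_castSucc_eq.2 (ne_of_mem_of_not_mem hi hJ))).elim

theorem FSetB_eq_preimage_staircase {b : Fin (n + 1) → E n} {α : Fin (n + 1) → ℚ}
    {J : Finset (Fin (n + 1))} {i₀ : Fin (n + 1)} {c : Fin (n + 1) → ℤ} (hn'n : n' ≤ n)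
    (hα : ∀ i ∈ Iprime n n', 0 < α i) (hi₀ : i₀ ∈ Iprime n n' \ J) {Φ : E n → Fin n → ℝ}
    (hΦ : ∀ x j, Φ x j = ⟪x, b j.castSucc⟫) :
    FSetB n n' b α J i₀ c = Φ ⁻¹' staircase (castSuccPreimage (Iprime n n')) (castSuccPreimage J)
      (fun j ↦ (α j.castSucc : ℝ)) (fun j ↦ c j.castSucc) (c (Fin.last n)) := by
  ext x
  rw [mem_FSetB_iff hn'n hα hi₀, mem_preimage, mem_staircase, upperOrthant, mem_ofPred_eq,
    stairSum, ← sum_castSuccPreimage (fun h ↦ Iprime_ne_last hn'n h rfl)]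
  simp only [hΦ]
  exact and_congr_left' forall_mem_castSuccPreimage_iff.symm

theorem CSet_subset_CSet {b : Fin (n + 1) → E n} {J₁ J₂ : Finset (Fin (n + 1))}
    {c₁ c₂ : Fin (n + 1) → ℤ} (hJ₁ : Fin.last n ∈ J₁) {Φ : E n → Fin n → ℝ}
    (hΦ : ∀ x j, Φ x j = ⟪x, b j.castSucc⟫)
    (hsub : upperOrthant (castSuccPreimage J₁) (fun j ↦ c₁ j.castSucc) ⊆
      upperOrthant (castSuccPreimage J₂) (fun j ↦ c₂ j.castSucc))
    (hle : c₂ (Fin.last n) ≤ c₁ (Fin.last n)) : CSet n b J₁ c₁ ⊆ CSet n b J₂ c₂ := by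
  intro x hx i hi
  induction i using Fin.lastCases with
  | last => exact (Int.cast_le.2 hle).trans_lt (hx _ hJ₁)
  | cast j =>
    have hΦx : Φ x ∈ upperOrthant (castSuccPreimage J₁) (fun j ↦ c₁ j.castSucc) :=
      fun k hk ↦ (hΦ x k).symm ▸ hx _ (mem_castSuccPreimage.1 hk)
    simpa [hΦ] using hsub hΦx j (mem_castSuccPreimage.2 hi)

end SetupB

theorem stmt4_general (n n' : ℕ) (hn'n : n' ≤ n)
    (b : Fin (n + 1) → E n) (α : Fin (n + 1) → ℚ)
    (hspan : Submodule.span ℝ (Set.range fun i : Fin n => b i.castSucc) = ⊤)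
    (hα : ∀ i : Fin (n + 1), i.val < n' → 0 < α i)
    (hαsum : ∑ i ∈ Iprime n n', α i ≤ 1)
    (J₁ J₂ : Finset (Fin (n + 1)))
    (hJ₁last : Fin.last n ∈ J₁)
    (i₁₀ i₂₀ : Fin (n + 1))
    (hi₁₀ : i₁₀ ∈ Iprime n n' \ J₁) (hi₂₀ : i₂₀ ∈ Iprime n n' \ J₂)
    (c₁ c₂ : Fin (n + 1) → ℤ)
    (hC : ¬ CSet n b J₁ c₁ ⊆ CSet n b J₂ c₂) :
    ¬ FSetB n n' b α J₁ i₁₀ c₁ ⊆ FSetB n n' b α J₂ i₂₀ c₂ ∧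
      ContractibleSpace ↥(FSetB n n' b α J₁ i₁₀ c₁ \ FSetB n n' b α J₂ i₂₀ c₂) := by
  have hαI : ∀ i ∈ Iprime n n', 0 < α i := fun i hi ↦ hα i (Finset.mem_filter.1 hi).2
  have hnotlast : Fin.last n ∉ Iprime n n' := fun h ↦ Iprime_ne_last hn'n h rfl
  obtain ⟨Φ, hΦ⟩ := exists_homeomorph_apply_eq_inner _ hspan (by simp)
  obtain ⟨hi₁₀I, hi₁₀J⟩ := Finset.mem_sdiff.1 hi₁₀
  obtain ⟨hi₂₀I, hi₂₀J⟩ := Finset.mem_sdiff.1 hi₂₀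
  obtain ⟨u₁, rfl⟩ := Fin.exists_castSucc_eq.2 (Iprime_ne_last hn'n hi₁₀I)
  obtain ⟨u₂, rfl⟩ := Fin.exists_castSucc_eq.2 (Iprime_ne_last hn'n hi₂₀I)
  have hW := contractibleSpace_staircase_diff (a := fun j ↦ (α j.castSucc : ℝ))
    (fun j hj ↦ by exact_mod_cast (hαI _ (mem_castSuccPreimage.1 hj)).le)
    (by rw [sum_castSuccPreimage hnotlast (fun i ↦ (α i : ℝ))]; exact_mod_cast hαsum)
    (mem_castSuccPreimage.2 hi₁₀I) (by exact_mod_cast hαI _ hi₁₀I) (by simpa using hi₁₀J)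
    (mem_castSuccPreimage.2 hi₂₀I) (by exact_mod_cast hαI _ hi₂₀I) (by simpa using hi₂₀J)
    fun h ↦ hC (CSet_subset_CSet hJ₁last hΦ h.1 h.2)
  have hF : ContractibleSpace
      ↥(FSetB n n' b α J₁ u₁.castSucc c₁ \ FSetB n n' b α J₂ u₂.castSucc c₂) := by
    rw [FSetB_eq_preimage_staircase hn'n hαI hi₁₀ hΦ, FSetB_eq_preimage_staircase hn'n hαI hi₂₀ hΦ,
      ← preimage_sdiff]
    exact Φ.contractibleSpace_preimage hW
  exact ⟨sdiff_nonempty.1 (nonempty_coe_sort.1 inferInstance), hF⟩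

/-- Setup B: for `J₁, J₂ ∈ Λ` with `n+1 ∈ J₁` and `n+1 ∈ J₂`, integer
data `c¹, c²`, and choices `i_{1,0} ∈ I'∖J₁`, `i_{2,0} ∈ I'∖J₂`: if `C(J₁,c¹)` is not
contained in `C(J₂,c²)`, then `F(J₁,c¹)` is not contained in `F(J₂,c²)`, and
`F(J₁,c¹) ∖ F(J₂,c²)` with the subspace topology is contractible. -/
theorem stmt4 (n n' : ℕ) (hn'1 : 1 ≤ n') (hn'n : n' ≤ n)
    (b : Fin (n + 1) → E n) (α : Fin (n + 1) → ℚ)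
    (hb : LinearIndependent ℝ fun i : Fin n => b i.castSucc)
    (hspan : Submodule.span ℝ (Set.range fun i : Fin n => b i.castSucc) = ⊤)
    (hα : ∀ i : Fin (n + 1), i.val < n' → 0 < α i)
    (hαsum : ∑ i ∈ Iprime n n', α i ≤ 1)
    (hlast : b (Fin.last n) = ∑ i ∈ Iprime n n', (α i : ℝ) • b i)
    (J₁ J₂ : Finset (Fin (n + 1)))
    (hJ₁ne : J₁ ≠ Finset.univ) (hJ₁I : ¬ Iprime n n' ⊆ J₁)
    (hJ₂ne : J₂ ≠ Finset.univ) (hJ₂I : ¬ Iprime n n' ⊆ J₂)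
    (hJ₁last : Fin.last n ∈ J₁) (hJ₂last : Fin.last n ∈ J₂)
    (i₁₀ i₂₀ : Fin (n + 1))
    (hi₁₀ : i₁₀ ∈ Iprime n n' \ J₁) (hi₂₀ : i₂₀ ∈ Iprime n n' \ J₂)
    (c₁ c₂ : Fin (n + 1) → ℤ)
    (hC : ¬ CSet n b J₁ c₁ ⊆ CSet n b J₂ c₂) :
    ¬ FSetB n n' b α J₁ i₁₀ c₁ ⊆ FSetB n n' b α J₂ i₂₀ c₂ ∧
      ContractibleSpace ↥(FSetB n n' b α J₁ i₁₀ c₁ \ FSetB n n' b α J₂ i₂₀ c₂) :=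
  stmt4_general n n' hn'n b α hspan hα hαsum J₁ J₂ hJ₁last i₁₀ i₂₀ hi₁₀ hi₂₀ c₁ c₂ hC
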